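/- Let ε_k = e_1 + ξ_k with ξ_k i.i.d. N(0, I_n), n ≥ 2, and let ν̄_k = (1/k)Σ_{i=1}^k ξ_i. Define x_k = (e_1 + ν̄_k)/‖e_1 + ν̄_k‖. Then the first coordinate of √k · ((1/k)Σ_{i=1}^k x_i − e_1) converges almost surely to 0. -/

import Mathlib

/-!
Each coordinate of `k ν̄_k` is a sum of `k` independent standard Gaussians, so by the Chernoff bound
and Borel–Cantelli it is eventually below `k ^ (5/8)`; hence `k ^ (1/4) ν̄_k → 0` almost surely.
Since `e₁ + ν̄_k` has first coordinate close to `1`, normalizing it changes the first coordinate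
by at most `2 ‖ν̄_k⊥‖²`, so `√k (x_k 1 - 1) → 0`. A discrete Stolz–Cesàro argument, comparing with
the telescoping sums of `√(i + 1) - √i`, transfers this rate to the averages of the `x_i 1`.
-/

open Filter Topology Finset Asymptotics MeasureTheory ProbabilityTheory Real
open scoped NNReal

section SubGaussian

variable {Ω : Type*} {mΩ : MeasurableSpace Ω} {μ : Measure Ω}

lemma hasSubgaussianMGF_of_map_eq_gaussianReal {X : Ω → ℝ} {v : ℝ≥0}
    (h : μ.map X = gaussianReal 0 v) : HasSubgaussianMGF X v μ := by
  have hX : AEMeasurable X μ := aemeasurable_of_map_neZero (by rw [h]; infer_instance)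
  refine (HasSubgaussianMGF.id_map_iff hX).mp ⟨fun t => ?_, fun t => ?_⟩
  · rw [h]; exact integrable_exp_mul_gaussianReal t
  · rw [h, mgf_id_gaussianReal]; simp

lemma ProbabilityTheory.HasSubgaussianMGF.measureReal_abs_ge_le [IsFiniteMeasure μ]
    {X : Ω → ℝ} {c : ℝ≥0} (h : HasSubgaussianMGF X c μ) {ε : ℝ} (hε : 0 ≤ ε) :
    μ.real {ω | ε ≤ |X ω|} ≤ 2 * exp (-ε ^ 2 / (2 * c)) := by
  have hsplit : {ω | ε ≤ |X ω|} = {ω | ε ≤ X ω} ∪ {ω | ε ≤ (-X) ω} := by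
    ext ω; simp only [le_abs', Set.mem_ofPred_eq, Set.mem_union, Pi.neg_apply, le_neg]; tauto
  calc μ.real {ω | ε ≤ |X ω|} ≤ μ.real {ω | ε ≤ X ω} + μ.real {ω | ε ≤ (-X) ω} := by
        rw [hsplit]; exact measureReal_union_le _ _
    _ ≤ exp (-ε ^ 2 / (2 * c)) + exp (-ε ^ 2 / (2 * c)) :=
        add_le_add (h.measure_ge_le hε) (h.neg.measure_ge_le hε)
    _ = 2 * exp (-ε ^ 2 / (2 * c)) := by ring

lemma summable_exp_neg_mul_rpow {a p : ℝ} (ha : 0 < a) (hp : 0 < p) :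
    Summable fun k : ℕ => exp (-a * (k : ℝ) ^ p) := by
  have hlim : Tendsto (fun k : ℕ => (k : ℝ) ^ p) atTop atTop :=
    (tendsto_rpow_atTop hp).comp tendsto_natCast_atTop_atTop
  have ho := (isLittleO_exp_neg_mul_rpow_atTop ha (-2 / p)).comp_tendsto hlim
  refine summable_of_isBigO_nat (Real.summable_nat_rpow.mpr (by norm_num : (-2 : ℝ) < -1))
    (ho.isBigO.trans (EventuallyEq.isBigO ?_))
  filter_upwards with k
  simp only [Function.comp_apply]
  rw [← rpow_mul (Nat.cast_nonneg k), mul_div_cancel₀ _ hp.ne']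

lemma ae_eventually_notMem_of_measureReal_le_of_summable [IsFiniteMeasure μ] {s : ℕ → Set Ω}
    {p : ℕ → ℝ} (hp : Summable p) (hs : ∀ k, μ.real (s k) ≤ p k) :
    ∀ᵐ ω ∂μ, ∀ᶠ k in atTop, ω ∉ s k := by
  have hp0 : ∀ k, 0 ≤ p k := fun k => measureReal_nonneg.trans (hs k)
  refine ae_eventually_notMem
    (ne_top_of_le_ne_top (b := ENNReal.ofReal (∑' k, p k)) ENNReal.ofReal_ne_top ?_)
  rw [ENNReal.ofReal_tsum_of_nonneg hp0 hp]
  refine ENNReal.tsum_le_tsum fun k => ?_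
  rw [← ofReal_measureReal]
  exact ENNReal.ofReal_le_ofReal (hs k)

theorem ae_eventually_abs_sum_Icc_lt_rpow {Y : ℕ → Ω → ℝ} {c : ℝ≥0} (hc : 0 < c)
    (hindep : iIndepFun Y μ) (hY : ∀ i, HasSubgaussianMGF (Y i) c μ) {α : ℝ} (hα : 1 / 2 < α) :
    ∀ᵐ ω ∂μ, ∀ᶠ k : ℕ in atTop, |∑ i ∈ Icc 1 k, Y i ω| < (k : ℝ) ^ α := by
  have := hindep.isProbabilityMeasure
  have hsum : ∀ k : ℕ, HasSubgaussianMGF (fun ω => ∑ i ∈ Icc 1 k, Y i ω) (k * c) μ := fun k => by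
    simpa using HasSubgaussianMGF.sum_of_iIndepFun hindep (s := Icc 1 k) fun i _ => hY i
  have htail : ∀ k : ℕ, μ.real {ω | (k : ℝ) ^ α ≤ |∑ i ∈ Icc 1 k, Y i ω|} ≤
      2 * exp (-(2 * c)⁻¹ * (k : ℝ) ^ (2 * α - 1)) := fun k => by
    refine ((hsum k).measureReal_abs_ge_le (by positivity)).trans_eq ?_
    congr 2
    rcases k.eq_zero_or_pos with rfl | hk
    · simp [zero_rpow (by linarith : α ≠ 0), zero_rpow (by linarith : 2 * α - 1 ≠ 0)]
    · have hk : (0 : ℝ) < k := by exact_mod_cast hk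
      rw [← rpow_natCast, ← rpow_mul hk.le, rpow_sub hk, rpow_one]
      push_cast
      field_simp
  filter_upwards [ae_eventually_notMem_of_measureReal_le_of_summable
    ((summable_exp_neg_mul_rpow (by positivity) (by linarith)).mul_left 2) htail] with ω hω
  simpa using hω

theorem ae_tendsto_rpow_neg_mul_sum_Icc {Y : ℕ → Ω → ℝ} {c : ℝ≥0} (hc : 0 < c)
    (hindep : iIndepFun Y μ) (hY : ∀ i, HasSubgaussianMGF (Y i) c μ) {β : ℝ} (hβ : 1 / 2 < β) :
    ∀ᵐ ω ∂μ, Tendsto (fun k : ℕ => (k : ℝ) ^ (-β) * ∑ i ∈ Icc 1 k, Y i ω) atTop (𝓝 0) := by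
  filter_upwards [ae_eventually_abs_sum_Icc_lt_rpow hc hindep hY
    (α := (1 / 2 + β) / 2) (by linarith)] with ω hω
  refine squeeze_zero_norm' ?_ ((tendsto_rpow_neg_atTop (y := (β - 1 / 2) / 2) (by linarith)).comp
    tendsto_natCast_atTop_atTop)
  filter_upwards [hω, eventually_gt_atTop 0] with k hk hk0
  have hk0 : (0 : ℝ) < k := by exact_mod_cast hk0
  calc ‖(k : ℝ) ^ (-β) * ∑ i ∈ Icc 1 k, Y i ω‖
      ≤ (k : ℝ) ^ (-β) * (k : ℝ) ^ ((1 / 2 + β) / 2) := by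
        rw [norm_mul, norm_of_nonneg (by positivity)]
        exact mul_le_mul_of_nonneg_left hk.le (by positivity)
    _ = (k : ℝ) ^ (-((β - 1 / 2) / 2)) := by rw [← rpow_add hk0]; ring_nf

end SubGaussian

lemma abs_inv_sqrt_sq_add_mul_sub_one_le {A T : ℝ} (hA : 1 / 2 ≤ A) (hT : 0 ≤ T) :
    |(√(A ^ 2 + T))⁻¹ * A - 1| ≤ 2 * T := by
  set r := √(A ^ 2 + T)
  have hAr : A ≤ r := le_sqrt_of_sq_le (by linarith)
  have hrA : r ≤ A + T := sqrt_le_iff.mpr ⟨by linarith, by nlinarith⟩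
  have hr : 0 < r := by linarith
  rw [abs_sub_comm, abs_of_nonneg (by rw [sub_nonneg, inv_mul_le_iff₀ hr]; linarith),
    show 1 - r⁻¹ * A = (r - A) / r by field_simp, div_le_iff₀ hr]
  nlinarith

lemma abs_inv_sqrt_sum_sq_single_add_sub_one_le {ι : Type*} [Fintype ι] [DecidableEq ι] (p : ι)
    {v : ι → ℝ} (hv : -1 / 2 ≤ v p) :
    |(√(∑ j, ((Pi.single p 1 : ι → ℝ) j + v j) ^ 2))⁻¹ * (1 + v p) - 1| ≤
      2 * ∑ j ∈ {p}ᶜ, v j ^ 2 := by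
  rw [Fintype.sum_eq_add_sum_compl p]
  have hcompl : ∑ j ∈ {p}ᶜ, ((Pi.single p 1 : ι → ℝ) j + v j) ^ 2 = ∑ j ∈ {p}ᶜ, v j ^ 2 :=
    sum_congr rfl fun j hj => by rw [Pi.single_eq_of_ne (by simpa using hj), zero_add]
  rw [hcompl, Pi.single_eq_same]
  exact abs_inv_sqrt_sq_add_mul_sub_one_le (by linarith) (sum_nonneg fun j _ => sq_nonneg _)

theorem tendsto_sq_mul_inv_sqrt_sum_sq_single_add_sub_one {α ι : Type*} [Fintype ι]
    [DecidableEq ι] {l : Filter α} (p : ι) {r : α → ℝ} {v : α → ι → ℝ}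
    (hr : ∀ᶠ a in l, 1 ≤ r a) (hv : ∀ j, Tendsto (fun a => r a * v a j) l (𝓝 0)) :
    Tendsto (fun a => r a ^ 2 *
      ((√(∑ j, ((Pi.single p 1 : ι → ℝ) j + v a j) ^ 2))⁻¹ * (1 + v a p) - 1)) l (𝓝 0) := by
  have hbound : Tendsto (fun a => 2 * ∑ j ∈ {p}ᶜ, (r a * v a j) ^ 2) l (𝓝 0) := by
    simpa using (tendsto_finsetSum _ fun j _ => (hv j).pow 2).const_mul 2
  refine squeeze_zero_norm' ?_ hbound
  filter_upwards [hr, (hv p).eventually (Ioo_mem_nhds (by norm_num : (-1 / 2 : ℝ) < 0)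
    one_half_pos)] with a hra hvp
  have hvp : -1 / 2 ≤ v a p := by nlinarith [hvp.1, hvp.2]
  calc ‖r a ^ 2 * ((√(∑ j, ((Pi.single p 1 : ι → ℝ) j + v a j) ^ 2))⁻¹ * (1 + v a p) - 1)‖
      ≤ r a ^ 2 * (2 * ∑ j ∈ {p}ᶜ, v a j ^ 2) := by
        rw [norm_mul, norm_of_nonneg (sq_nonneg _)]
        exact mul_le_mul_of_nonneg_left
          (abs_inv_sqrt_sum_sq_single_add_sub_one_le p hvp) (sq_nonneg _)
    _ = 2 * ∑ j ∈ {p}ᶜ, (r a * v a j) ^ 2 := by simp only [mul_pow, ← mul_sum]; ring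

lemma sum_Icc_one_eq_sum_range {M : Type*} [AddCommMonoid M] (f : ℕ → M) (k : ℕ) :
    ∑ i ∈ Icc 1 k, f i = ∑ i ∈ range k, f (i + 1) := by
  rw [range_eq_Ico, sum_Ico_add' f 0 k 1]
  rfl

lemma inv_sqrt_succ_le_two_mul_sqrt_succ_sub_sqrt (i : ℕ) :
    (√(i + 1 : ℝ))⁻¹ ≤ 2 * (√(i + 1 : ℝ) - √i) := by
  have hsq : √(i + 1 : ℝ) ^ 2 - √(i : ℝ) ^ 2 = 1 := by
    rw [Real.sq_sqrt (by positivity), Real.sq_sqrt (by positivity)]; ring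
  have hle : √(i : ℝ) ≤ √(i + 1 : ℝ) := Real.sqrt_le_sqrt (by linarith)
  have hpos : 0 < √(i + 1 : ℝ) := Real.sqrt_pos.mpr (by positivity)
  rw [inv_le_iff_one_le_mul₀ hpos]
  nlinarith [Real.sqrt_nonneg (i : ℝ)]

theorem tendsto_inv_sqrt_mul_sum_Icc {d : ℕ → ℝ}
    (h : Tendsto (fun k : ℕ => √k * d k) atTop (𝓝 0)) :
    Tendsto (fun k : ℕ => (√k)⁻¹ * ∑ i ∈ Icc 1 k, d i) atTop (𝓝 0) := by
  set g : ℕ → ℝ := fun i => √(i + 1 : ℝ) - √i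
  have hg : ∀ i, 0 ≤ g i := fun i => sub_nonneg.mpr (Real.sqrt_le_sqrt (by simp))
  have hsum : ∀ k, ∑ i ∈ range k, g i = √k := fun k => by
    simpa [g] using sum_range_sub (fun i : ℕ => √(i : ℝ)) k
  have hd : d =o[atTop] fun k : ℕ => (√k)⁻¹ := by
    refine (isLittleO_iff_tendsto' ?_).mpr (by simpa [div_inv_eq_mul, mul_comm] using h)
    filter_upwards [eventually_ge_atTop 1] with k hk h0
    exact absurd h0 (by positivity)
  have hdg : (fun i => d (i + 1)) =o[atTop] g := by
    refine (hd.comp_tendsto (tendsto_add_atTop_nat 1)).trans_isBigO (IsBigO.of_bound 2 ?_)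
    filter_upwards with i
    simpa [Real.norm_eq_abs, abs_of_nonneg (hg i), abs_of_nonneg (Real.sqrt_nonneg _)] using
      inv_sqrt_succ_le_two_mul_sqrt_succ_sub_sqrt i
  have hg_sum : Tendsto (fun k => ∑ i ∈ range k, g i) atTop atTop := by
    simp only [hsum]
    exact Real.tendsto_sqrt_atTop.comp tendsto_natCast_atTop_atTop
  simpa [hsum, sum_Icc_one_eq_sum_range, div_eq_inv_mul] using
    (hdg.sum_range hg hg_sum).tendsto_div_nhds_zero

theorem tendsto_sqrt_mul_average_sub {y : ℕ → ℝ} {a : ℝ}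
    (h : Tendsto (fun k : ℕ => √k * (y k - a)) atTop (𝓝 0)) :
    Tendsto (fun k : ℕ => √k * ((k : ℝ)⁻¹ * ∑ i ∈ Icc 1 k, y i - a)) atTop (𝓝 0) := by
  refine (tendsto_inv_sqrt_mul_sum_Icc h).congr fun k => ?_
  rcases k.eq_zero_or_pos with rfl | hk
  · simp
  have hk : (0 : ℝ) < k := by exact_mod_cast hk
  rw [sum_sub_distrib, sum_const, Nat.card_Icc, Nat.add_sub_cancel, nsmul_eq_mul]
  field_simp
  rw [sq_sqrt hk.le]


/-- With `ξ i` i.i.d. `N(0, Iₙ)` (`n ≥ 2`), `ν̄_k = (1/k)∑_{i≤k} ξ i` and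
`x_k = (e₁ + ν̄_k)/‖e₁ + ν̄_k‖`, the first coordinate of
`√k ((1/k)∑_{i≤k} x_i − e₁)` converges almost surely to `0`. -/
theorem stmt_15 {Ω : Type*} [MeasurableSpace Ω] (μ : Measure Ω)
    (n : ℕ) (hn : 2 ≤ n) (ξ : ℕ → Ω → Fin n → ℝ)
    (hindep : iIndepFun ξ μ)
    (hdist : ∀ i, Measure.map (ξ i) μ = Measure.pi fun _ : Fin n => gaussianReal 0 1)
    (e₁ : Fin n → ℝ) (he₁ : e₁ = Pi.single (⟨0, by omega⟩ : Fin n) 1)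
    (x : ℕ → Ω → Fin n → ℝ)
    (hx : ∀ k ω, x k ω =
      (Real.sqrt (∑ j, (e₁ j + (k : ℝ)⁻¹ * ∑ i ∈ Finset.Icc 1 k, ξ i ω j) ^ 2))⁻¹ •
        (fun j => e₁ j + (k : ℝ)⁻¹ * ∑ i ∈ Finset.Icc 1 k, ξ i ω j)) :
    ∀ᵐ ω ∂μ, Filter.Tendsto
      (fun k : ℕ => Real.sqrt k *
        ((k : ℝ)⁻¹ * (∑ i ∈ Finset.Icc 1 k, x i ω (⟨0, by omega⟩ : Fin n)) - 1))
      Filter.atTop (nhds 0) := by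
  have hξ : ∀ i, AEMeasurable (ξ i) μ := fun i =>
    aemeasurable_of_map_neZero (by rw [hdist i]; infer_instance)
  have hcoord : ∀ j, ∀ᵐ ω ∂μ,
      Tendsto (fun k : ℕ => (k : ℝ) ^ (-(3 / 4 : ℝ)) * ∑ i ∈ Icc 1 k, ξ i ω j) atTop (𝓝 0) :=
    fun j => ae_tendsto_rpow_neg_mul_sum_Icc one_pos
      (hindep.comp (fun _ v => v j) fun _ => measurable_pi_apply j)
      (fun i => hasSubgaussianMGF_of_map_eq_gaussianReal (v := 1) (by
        rw [← AEMeasurable.map_map_of_aemeasurable (measurable_pi_apply j).aemeasurable (hξ i),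
          hdist i, (measurePreserving_eval _ j).map_eq]))
      (by norm_num)
  filter_upwards [ae_all_iff.2 hcoord] with ω hω
  subst he₁
  refine tendsto_sqrt_mul_average_sub ?_
  have hr : ∀ᶠ k : ℕ in atTop, 1 ≤ (k : ℝ) ^ (1 / 4 : ℝ) :=
    (eventually_ge_atTop 1).mono fun k hk => one_le_rpow (by exact_mod_cast hk) (by norm_num)
  have hv : ∀ j, Tendsto (fun k : ℕ => (k : ℝ) ^ (1 / 4 : ℝ) *
      ((k : ℝ)⁻¹ * ∑ i ∈ Icc 1 k, ξ i ω j)) atTop (𝓝 0) := fun j => by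
    refine (hω j).congr fun k => ?_
    rw [← mul_assoc, ← rpow_neg_one, ← rpow_add' (Nat.cast_nonneg k) (by norm_num)]
    norm_num
  have hsq : ∀ k : ℕ, ((k : ℝ) ^ (1 / 4 : ℝ)) ^ 2 = √k := fun k => by
    rw [← rpow_natCast, ← rpow_mul (Nat.cast_nonneg k), sqrt_eq_rpow]
    norm_num
  have key := tendsto_sq_mul_inv_sqrt_sum_sq_single_add_sub_one (⟨0, by omega⟩ : Fin n) hr hv
  simp only [hsq] at key
  simpa [hx] using key
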